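/- arXiv:1810.03177 — 6 statements merged into one kernel-verified Lean document; each statement's English description precedes it below -/
import Mathlib

section
/- Let G be a finite strongly connected digraph and let S be the set of all n ≥ 1 such that there is a closed directed walk of length n in G that uses every edge of G at least once. Then every element of S is a multiple of the algebraic length al(G), and conversely every sufficiently large multiple of al(G) belongs to S. -/
/-!
Fix a vertex `v` and let `g` be the gcd of the lengths of closed directed walks at `v`. Choosing
for each vertex `x` the length `p x` of a walk from `v` to `x`, every edge `(a, b)` satisfies
`p a + 1 ≡ p b [ZMOD g]`, since both `p a + 1 + q b` and `p b + q b` are closed walk lengths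
(`q b` the length of a walk from `b` back to `v`). Summing along an oriented closed walk, the
potential `p` telescopes, so `g` divides every algebraic length and hence `g = al(G)`. The
closed walk lengths at `v` form an additive submonoid of `ℕ`, so they contain every large
multiple of `g`; appending such a walk to one closed walk through all edges gives the claim.
-/

namespace DirWalk

variable {V : Type*}

section Walks

variable (E : Set (V × V))

def IsWalk (m : ℕ) (w : ℕ → V) (x y : V) : Prop :=
  w 0 = x ∧ w m = y ∧ ∀ i < m, (w i, w (i + 1)) ∈ E

def IsStronglyConnected : Prop :=
  ∀ x y, ∃ m w, IsWalk E m w x y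

def IsOrientedWalk (m : ℕ) (w : ℕ → V) (ε : ℕ → Bool) : Prop :=
  ∀ i < m, if ε i then (w i, w (i + 1)) ∈ E else (w (i + 1), w i) ∈ E

/-- `ε i` records whether the `i`-th step is traversed forwards. -/
def algLength (m : ℕ) (ε : ℕ → Bool) : ℤ :=
  ∑ i ∈ Finset.range m, if ε i then 1 else -1

def DvdAlgLengths (g : ℤ) : Prop :=
  ∀ (m : ℕ) (w : ℕ → V) (ε : ℕ → Bool), w m = w 0 → IsOrientedWalk E m w ε → g ∣ algLength m ε

def edgesOf (m : ℕ) (w : ℕ → V) : Set (V × V) :=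
  {e | ∃ i < m, (w i, w (i + 1)) = e}

def append (m : ℕ) (w₁ w₂ : ℕ → V) : ℕ → V :=
  fun i => if i < m then w₁ i else w₂ (i - m)

end Walks

variable {E : Set (V × V)} {m n : ℕ} {w w₁ w₂ : ℕ → V} {x y z : V}

theorem append_step_of_lt (h : w₁ m = w₂ 0) {i : ℕ} (hi : i < m) :
    (append m w₁ w₂ i, append m w₁ w₂ (i + 1)) = (w₁ i, w₁ (i + 1)) := by
  rcases (Nat.succ_le_of_lt hi).lt_or_eq with hi' | hi'
  · simp [append, hi, hi']
  · subst hi'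
    simp [append, h]

theorem append_step_add (j : ℕ) :
    (append m w₁ w₂ (m + j), append m w₁ w₂ (m + j + 1)) = (w₂ j, w₂ (j + 1)) := by
  simp [append, add_assoc]

theorem IsWalk.append (h₁ : IsWalk E m w₁ x y) (h₂ : IsWalk E n w₂ y z) :
    IsWalk E (m + n) (append m w₁ w₂) x z := by
  obtain ⟨h₁0, h₁m, h₁s⟩ := h₁
  obtain ⟨h₂0, h₂n, h₂s⟩ := h₂
  have hjoin : w₁ m = w₂ 0 := h₁m.trans h₂0.symm
  refine ⟨?_, by simpa [DirWalk.append] using h₂n, fun i hi => ?_⟩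
  · rcases Nat.eq_zero_or_pos m with rfl | hm
    · simpa [DirWalk.append, ← hjoin] using h₁0
    · simpa [DirWalk.append, hm] using h₁0
  · rcases lt_or_ge i m with him | him
    · rw [append_step_of_lt hjoin him]; exact h₁s i him
    · obtain ⟨j, rfl⟩ := Nat.exists_eq_add_of_le him
      rw [append_step_add]; exact h₂s j (by omega)

theorem edgesOf_append_subset (h : w₁ m = w₂ 0) :
    edgesOf m w₁ ∪ edgesOf n w₂ ⊆ edgesOf (m + n) (append m w₁ w₂) := by
  rintro e (⟨i, hi, rfl⟩ | ⟨j, hj, rfl⟩)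
  · exact ⟨i, by omega, append_step_of_lt h hi⟩
  · exact ⟨m + j, by omega, append_step_add j⟩

theorem IsWalk.nil (x : V) : IsWalk E 0 (fun _ => x) x x :=
  ⟨rfl, rfl, fun _ hi => absurd hi (Nat.not_lt_zero _)⟩

theorem IsWalk.edge (h : (x, y) ∈ E) : IsWalk E 1 (fun i => if i = 0 then x else y) x y :=
  ⟨rfl, rfl, fun i hi => by simpa [Nat.lt_one_iff.mp hi] using h⟩

theorem mem_edgesOf_edge : (x, y) ∈ edgesOf 1 (fun i => if i = 0 then x else y) :=
  ⟨0, Nat.one_pos, by simp⟩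

theorem ne_zero_of_mem_edgesOf {e : V × V} (he : e ∈ edgesOf m w) : m ≠ 0 := by
  obtain ⟨i, hi, -⟩ := he
  omega

def closedWalkLengths (E : Set (V × V)) (v : V) : AddSubmonoid ℕ where
  carrier := {m | ∃ w, IsWalk E m w v v}
  zero_mem' := ⟨_, IsWalk.nil v⟩
  add_mem' := fun ⟨_, h₁⟩ ⟨_, h₂⟩ => ⟨_, h₁.append h₂⟩

theorem exists_closedWalk_mem_edgesOf (hsc : IsStronglyConnected E) (v : V)
    {a b : V} (hab : (a, b) ∈ E) : ∃ m w, IsWalk E m w v v ∧ (a, b) ∈ edgesOf m w := by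
  obtain ⟨m₁, w₁, h₁⟩ := hsc v a
  obtain ⟨m₂, w₂, h₂⟩ := hsc b v
  have h₁e := h₁.append (IsWalk.edge hab)
  refine ⟨_, _, h₁e.append h₂, edgesOf_append_subset (h₁e.2.1.trans h₂.1.symm) (Or.inl ?_)⟩
  exact edgesOf_append_subset h₁.2.1 (Or.inr mem_edgesOf_edge)

theorem exists_closedWalk_subset_edgesOf (hsc : IsStronglyConnected E) (v : V)
    {F : Set (V × V)} (hF : F.Finite) (hFE : F ⊆ E) :
    ∃ m w, IsWalk E m w v v ∧ F ⊆ edgesOf m w := by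
  induction F, hF using Set.Finite.induction_on with
  | empty => exact ⟨0, _, IsWalk.nil v, Set.empty_subset _⟩
  | @insert e F _ _ ih =>
    obtain ⟨m₁, w₁, h₁, he⟩ := exists_closedWalk_mem_edgesOf hsc v (hFE (Set.mem_insert e F))
    obtain ⟨m₂, w₂, h₂, hF⟩ := ih ((Set.subset_insert e F).trans hFE)
    have hsub := edgesOf_append_subset (n := m₂) (h₁.2.1.trans h₂.1.symm)
    exact ⟨_, _, h₁.append h₂,
      Set.insert_subset (hsub (Or.inl he)) (hF.trans (Set.subset_union_right.trans hsub))⟩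

theorem exists_closedWalk_add_of_mem_closedWalkLengths {L : ℕ} {c : ℕ → V} {v : V}
    (hc : IsWalk E L c v v) (hm : m ∈ closedWalkLengths E v) :
    ∃ w, IsWalk E (L + m) w v v ∧ edgesOf L c ⊆ edgesOf (L + m) w := by
  obtain ⟨w, hw⟩ := hm
  exact ⟨_, hc.append hw,
    Set.subset_union_left.trans (edgesOf_append_subset (hc.2.1.trans hw.1.symm))⟩

theorem DvdAlgLengths.dvd_of_isWalk {g : ℕ} (hg : DvdAlgLengths E g) (h : IsWalk E n w x x) :
    g ∣ n := by
  have := hg n w (fun _ => true) (h.2.1.trans h.1.symm) (by simpa [IsOrientedWalk] using h.2.2)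
  simp only [algLength, if_true, Finset.sum_const, Finset.card_range, nsmul_one] at this
  exact_mod_cast this

theorem dvdAlgLengths_of_potential {g : ℤ} (p : V → ℤ)
    (hp : ∀ a b, (a, b) ∈ E → g ∣ p a + 1 - p b) : DvdAlgLengths E g := by
  intro m w ε hc hw
  have hstep : ∀ i ∈ Finset.range m,
      g ∣ (if ε i then 1 else -1) - (p (w (i + 1)) - p (w i)) := by
    intro i hi
    have := hw i (Finset.mem_range.mp hi)
    split_ifs at this ⊢
    · rw [show (1 : ℤ) - (p (w (i + 1)) - p (w i)) = p (w i) + 1 - p (w (i + 1)) by ring]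
      exact hp _ _ this
    · rw [show (-1 : ℤ) - (p (w (i + 1)) - p (w i)) = -(p (w (i + 1)) + 1 - p (w i)) by ring,
        dvd_neg]
      exact hp _ _ this
  simpa [Finset.sum_sub_distrib, Finset.sum_range_sub (fun i => p (w i)), hc, algLength]
    using Finset.dvd_sum hstep

theorem dvdAlgLengths_setGcd_closedWalkLengths (hsc : IsStronglyConnected E) (v : V) :
    DvdAlgLengths E (Nat.setGcd (closedWalkLengths E v)) := by
  choose len wlk hwlk using hsc
  have hdvd : ∀ {k}, k ∈ closedWalkLengths E v → (Nat.setGcd (closedWalkLengths E v) : ℤ) ∣ k :=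
    fun hk => Int.natCast_dvd_natCast.mpr (Nat.setGcd_dvd_of_mem hk)
  refine dvdAlgLengths_of_potential (fun x => len v x) fun a b hab => ?_
  have hthrough : len v a + 1 + len b v ∈ closedWalkLengths E v :=
    ⟨_, ((hwlk v a).append (IsWalk.edge hab)).append (hwlk b v)⟩
  have hback : len v b + len b v ∈ closedWalkLengths E v := ⟨_, (hwlk v b).append (hwlk b v)⟩
  have hdiff : ((len v a + 1 + len b v : ℕ) : ℤ) - (len v b + len b v : ℕ)
      = len v a + 1 - len v b := by push_cast; ring
  exact hdiff ▸ dvd_sub (hdvd hthrough) (hdvd hback)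

end DirWalk

open DirWalk in
/-- For a finite strongly connected digraph with an edge, the set `S` of lengths of
edge-surjective closed directed walks consists only of multiples of the algebraic
length `d` (the gcd of algebraic lengths of oriented closed walks), and contains all
sufficiently large multiples of `d`. -/
theorem stmt1 {V : Type} [Fintype V] (E : Set (V × V)) (hE : E.Nonempty)
    (hsc : ∀ x y : V, ∃ m : ℕ, ∃ w : ℕ → V,
      w 0 = x ∧ w m = y ∧ ∀ i < m, (w i, w (i + 1)) ∈ E)
    (S : Set ℕ)
    (hS : ∀ n : ℕ, n ∈ S ↔ 1 ≤ n ∧ ∃ w : ℕ → V, w n = w 0 ∧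
      (∀ i < n, (w i, w (i + 1)) ∈ E) ∧ ∀ e ∈ E, ∃ i < n, (w i, w (i + 1)) = e)
    (d : ℕ)
    (hd1 : ∀ (m : ℕ) (w : ℕ → V) (ε : ℕ → Bool), w m = w 0 →
      (∀ i < m, if ε i then (w i, w (i + 1)) ∈ E else (w (i + 1), w i) ∈ E) →
      (d : ℤ) ∣ ∑ i ∈ Finset.range m, (if ε i then 1 else -1 : ℤ))
    (hd2 : ∀ e : ℕ, (∀ (m : ℕ) (w : ℕ → V) (ε : ℕ → Bool), w m = w 0 →
      (∀ i < m, if ε i then (w i, w (i + 1)) ∈ E else (w (i + 1), w i) ∈ E) →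
      (e : ℤ) ∣ ∑ i ∈ Finset.range m, (if ε i then 1 else -1 : ℤ)) → e ∣ d) :
    (∀ n ∈ S, d ∣ n) ∧ ∃ N : ℕ, ∀ k ≥ N, d * k ∈ S := by
  have hd : DvdAlgLengths E d := hd1
  obtain ⟨⟨v, _⟩, he⟩ := hE
  set C := closedWalkLengths E v
  have hgcd : Nat.setGcd C = d := Nat.dvd_antisymm
    (hd2 _ (dvdAlgLengths_setGcd_closedWalkLengths hsc v))
    (Nat.dvd_setGcd_iff.mpr fun _ ⟨_, hw⟩ => hd.dvd_of_isWalk hw)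
  obtain ⟨N, hN⟩ := Nat.exists_mem_closure_of_ge (C : Set ℕ)
  rw [AddSubmonoid.closure_eq, hgcd] at hN
  obtain ⟨L, c, hc, hcov⟩ := exists_closedWalk_subset_edgesOf hsc v E.toFinite subset_rfl
  have hL : 0 < L := Nat.pos_of_ne_zero (ne_zero_of_mem_edgesOf (hcov he))
  have hdL : d ∣ L := hd.dvd_of_isWalk hc
  have hd0 : 0 < d := Nat.pos_of_dvd_of_pos hdL hL
  refine ⟨fun n hn => ?_, L + N, fun k hk => ?_⟩
  · obtain ⟨-, w, hw, hws, -⟩ := (hS n).mp hn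
    exact hd.dvd_of_isWalk (x := w 0) ⟨rfl, hw, hws⟩
  · have hkL : L + N ≤ d * k := hk.trans (Nat.le_mul_of_pos_left k hd0)
    obtain ⟨w, hw, hcw⟩ := exists_closedWalk_add_of_mem_closedWalkLengths hc
      (hN (d * k - L) (by omega) (Nat.dvd_sub (dvd_mul_right d k) hdL))
    rw [Nat.add_sub_cancel' (by omega)] at hw hcw
    exact (hS _).mpr ⟨by omega, w, hw.2.1.trans hw.1.symm, hw.2.2, fun e he => hcw (hcov he)⟩
end

section
/- A finite digraph G has a homomorphism to the directed n-cycle D_n if and only if every oriented closed walk in G has algebraic length divisible by n. In particular, the algebraic length of a weakly connected finite digraph G equals the largest n such that G maps homomorphically to D_n (or ∞ if G maps to ℤ). -/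
/-! A homomorphism to `D_n` is a potential `f : V → ℤ/n` that rises by one along every edge, so
along an oriented walk it changes by the algebraic length of the walk; hence closed walks have
algebraic length `0` in `ℤ/n`. Conversely, fix a root in every weak component and let `f v` be the
algebraic length of an oriented walk from the root of `v` to `v`. Two such walks differ by a closed
walk, so `f v` is well defined modulo `n`, and appending an edge shows that `f` is a homomorphism. -/

open Finset

section

variable {V : Type} {E : Set (V × V)}

def IsOrientedWalk (E : Set (V × V)) (m : ℕ) (w : ℕ → V) (ε : ℕ → Bool) : Prop :=
  ∀ i < m, if ε i then (w i, w (i + 1)) ∈ E else (w (i + 1), w i) ∈ E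

def algLength (m : ℕ) (ε : ℕ → Bool) : ℤ :=
  ∑ i ∈ range m, if ε i then 1 else -1

theorem IsOrientedWalk.apply_eq_add_algLength {R : Type*} [AddGroupWithOne R] {f : V → R}
    (hf : ∀ p ∈ E, f p.2 = f p.1 + 1) {m : ℕ} {w : ℕ → V} {ε : ℕ → Bool}
    (hw : IsOrientedWalk E m w ε) {j : ℕ} (hj : j ≤ m) :
    f (w j) = f (w 0) + algLength j ε := by
  induction j with
  | zero => simp [algLength]
  | succ j ih =>
    have hstep := hw j (by omega)
    rw [algLength, sum_range_succ, ← algLength]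
    cases hε : ε j <;> simp only [hε, if_true, if_false, Bool.false_eq_true] at hstep ⊢
    · rw [← add_sub_cancel_right (f (w (j + 1))) 1, ← hf _ hstep, ih (by omega)]
      push_cast
      rw [sub_eq_add_neg, add_assoc]
    · rw [hf _ hstep, ih (by omega)]
      push_cast
      rw [add_assoc]

theorem IsOrientedWalk.algLength_cast_eq_zero {R : Type*} [AddGroupWithOne R] {f : V → R}
    (hf : ∀ p ∈ E, f p.2 = f p.1 + 1) {m : ℕ} {w : ℕ → V} {ε : ℕ → Bool}
    (hw : IsOrientedWalk E m w ε) (hclosed : w m = w 0) :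
    (algLength m ε : R) = 0 := by
  have h := hw.apply_eq_add_algLength hf le_rfl
  rwa [hclosed, left_eq_add] at h

theorem IsOrientedWalk.snoc {m : ℕ} {w : ℕ → V} {ε : ℕ → Bool} (hw : IsOrientedWalk E m w ε)
    {c : V} {b : Bool} (hb : if b then (w m, c) ∈ E else (c, w m) ∈ E) :
    IsOrientedWalk E (m + 1) (Function.update w (m + 1) c) (Function.update ε m b) := by
  intro i hi
  rcases Nat.lt_succ_iff_lt_or_eq.mp hi with hi | rfl
  · rw [Function.update_of_ne (by omega), Function.update_of_ne (by omega),
      Function.update_of_ne (by omega)]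
    exact hw i hi
  · rwa [Function.update_self, Function.update_self, Function.update_of_ne (by omega)]

theorem algLength_update_succ (m : ℕ) (ε : ℕ → Bool) (b : Bool) :
    algLength (m + 1) (Function.update ε m b) = algLength m ε + if b then 1 else -1 := by
  rw [algLength, sum_range_succ, Function.update_self, algLength]
  congr 1
  refine sum_congr rfl fun i hi => ?_
  rw [Function.update_of_ne (by simp only [mem_range] at hi; omega)]

inductive OrientedReach (E : Set (V × V)) : V → V → ℤ → Prop
  | refl (v : V) : OrientedReach E v v 0
  | fwd {u v w : V} {k : ℤ} : OrientedReach E u v k → (v, w) ∈ E → OrientedReach E u w (k + 1)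
  | bwd {u v w : V} {k : ℤ} : OrientedReach E u v k → (w, v) ∈ E → OrientedReach E u w (k - 1)

namespace OrientedReach

variable {u v x : V} {k l : ℤ}

theorem trans (h₁ : OrientedReach E u v k) (h₂ : OrientedReach E v x l) :
    OrientedReach E u x (k + l) := by
  induction h₂ with
  | refl => simpa using h₁
  | fwd _ e ih => simpa only [add_assoc] using ih.fwd e
  | bwd _ e ih => simpa only [add_sub_assoc] using ih.bwd e

theorem symm (h : OrientedReach E u v k) : OrientedReach E v u (-k) := by
  induction h with
  | refl => simpa using refl _
  | fwd _ e ih => convert ((refl _).bwd e).trans ih using 1; ring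
  | bwd _ e ih => convert ((refl _).fwd e).trans ih using 1; ring

theorem exists_isOrientedWalk (h : OrientedReach E u v k) :
    ∃ (m : ℕ) (w : ℕ → V) (ε : ℕ → Bool),
      w 0 = u ∧ w m = v ∧ IsOrientedWalk E m w ε ∧ algLength m ε = k := by
  induction h with
  | refl => exact ⟨0, fun _ => _, fun _ => true, rfl, rfl, fun _ h => absurd h (by omega), rfl⟩
  | fwd _ e ih =>
    obtain ⟨m, w, ε, h0, hm, hw, rfl⟩ := ih
    refine ⟨m + 1, _, _, ?_, Function.update_self .., hw.snoc (b := true) (by simpa [hm]),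
      algLength_update_succ ..⟩
    rwa [Function.update_of_ne (by omega)]
  | bwd _ e ih =>
    obtain ⟨m, w, ε, h0, hm, hw, rfl⟩ := ih
    refine ⟨m + 1, _, _, ?_, Function.update_self .., hw.snoc (b := false) (by simpa [hm]), ?_⟩
    · rwa [Function.update_of_ne (by omega)]
    · simp [algLength_update_succ, sub_eq_add_neg]

def setoid (E : Set (V × V)) : Setoid V where
  r u v := ∃ k, OrientedReach E u v k
  iseqv :=
    ⟨fun v => ⟨0, refl v⟩, fun ⟨k, h⟩ => ⟨-k, h.symm⟩, fun ⟨k, h⟩ ⟨l, h'⟩ => ⟨k + l, h.trans h'⟩⟩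

end OrientedReach

theorem exists_potential_of_orientedReach_self {R : Type*} [AddGroupWithOne R]
    (hloop : ∀ u k, OrientedReach E u u k → (k : R) = 0) :
    ∃ f : V → R, ∀ p ∈ E, f p.2 = f p.1 + 1 := by
  let s := OrientedReach.setoid E
  choose k hk using fun v : V => Quotient.mk_out (s := s) v
  refine ⟨fun v => k v, ?_⟩
  rintro ⟨u, v⟩ huv
  have hroot : (Quotient.mk s u).out = (Quotient.mk s v).out :=
    congrArg _ (Quotient.sound ⟨0 + 1, (OrientedReach.refl u).fwd huv⟩)
  have hcycle := ((hk u).fwd huv).trans (hk v).symm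
  rw [hroot] at hcycle
  have h := hloop _ _ hcycle
  push_cast at h
  exact (add_neg_eq_zero.mp h).symm

end

theorem stmt4_general {V : Type} (E : Set (V × V)) (n : ℕ) :
    (∃ f : V → ZMod n, ∀ p ∈ E, f p.2 = f p.1 + 1) ↔
    (∀ (m : ℕ) (w : ℕ → V) (ε : ℕ → Bool), w m = w 0 →
      (∀ i < m, if ε i then (w i, w (i + 1)) ∈ E else (w (i + 1), w i) ∈ E) →
      (n : ℤ) ∣ ∑ i ∈ Finset.range m, (if ε i then 1 else -1 : ℤ)) := by
  constructor
  · rintro ⟨f, hf⟩ m w ε hclosed hw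
    exact (ZMod.intCast_zmod_eq_zero_iff_dvd _ n).mp
      (IsOrientedWalk.algLength_cast_eq_zero hf hw hclosed)
  · intro h
    refine exists_potential_of_orientedReach_self fun u k hloop => ?_
    obtain ⟨m, w, ε, h0, hm, hw, rfl⟩ := hloop.exists_isOrientedWalk
    exact (ZMod.intCast_zmod_eq_zero_iff_dvd _ n).mpr (h m w ε (hm.trans h0.symm) hw)

/-- A finite digraph has a homomorphism to the directed `n`-cycle `D_n` iff every
oriented closed walk has algebraic length divisible by `n`. -/
theorem stmt4 {V : Type} [Fintype V] (E : Set (V × V)) (n : ℕ) (hn : 0 < n) :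
    (∃ f : V → ZMod n, ∀ p ∈ E, f p.2 = f p.1 + 1) ↔
    (∀ (m : ℕ) (w : ℕ → V) (ε : ℕ → Bool), w m = w 0 →
      (∀ i < m, if ε i then (w i, w (i + 1)) ∈ E else (w (i + 1), w i) ∈ E) →
      (n : ℤ) ∣ ∑ i ∈ Finset.range m, (if ε i then 1 else -1 : ℤ)) :=
  stmt4_general E n
end

section
/- Every strongly connected loopless finite digraph G of algebraic length 1 is, for all sufficiently large p and sufficiently large odd c, a homomorphic image of DCP(2^p, c): there is a digraph homomorphism from DCP(2^p, c) onto G (in fact a homomorphism suffices). -/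
/-!
Fix a vertex `v` and let `S` be the additive monoid of lengths of closed directed walks at `v`.
Choosing for each vertex `x` the length `ℓ x` of some walk from `v` to `x`, strong connectivity
shows that `gcd S` divides `ℓ x + 1 - ℓ y` for every edge `x → y`. Summing along an oriented
closed walk, `gcd S` divides its algebraic length, so `gcd S = 1` by hypothesis. A submonoid of
`ℕ` with gcd `1` contains all sufficiently large numbers, in particular `2 ^ p` and `c`.
-/

section

variable {V : Type*} {E : Set (V × V)}

def IsDirectedWalk (E : Set (V × V)) (w : ℕ → V) (m : ℕ) (x y : V) : Prop :=
  w 0 = x ∧ w m = y ∧ ∀ i < m, (w i, w (i + 1)) ∈ E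

lemma IsDirectedWalk.append {w₁ w₂ : ℕ → V} {m n : ℕ} {x y z : V}
    (h₁ : IsDirectedWalk E w₁ m x y) (h₂ : IsDirectedWalk E w₂ n y z) :
    IsDirectedWalk E (fun i => if i ≤ m then w₁ i else w₂ (i - m)) (m + n) x z := by
  obtain ⟨h₁0, h₁m, h₁E⟩ := h₁
  obtain ⟨h₂0, h₂n, h₂E⟩ := h₂
  refine ⟨by simpa using h₁0, ?_, fun i hi => ?_⟩
  · dsimp only
    split_ifs with h
    · obtain rfl : n = 0 := by omega
      simp_all
    · simpa using h₂n
  · rcases lt_or_ge i m with him | him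
    · simpa [him.le, Nat.succ_le_of_lt him] using h₁E i him
    · have := h₂E (i - m) (by omega)
      rw [show i - m + 1 = i + 1 - m by omega] at this
      rcases him.eq_or_lt with rfl | him
      · simpa [h₁m, ← h₂0] using this
      · simpa [him.not_ge, show ¬ i + 1 ≤ m by omega] using this

variable (E) in
def closedWalkLengths (v : V) : AddSubmonoid ℕ where
  carrier := {m | ∃ w, IsDirectedWalk E w m v v}
  zero_mem' := ⟨fun _ => v, rfl, rfl, by simp⟩
  add_mem' := fun ⟨_, h₁⟩ ⟨_, h₂⟩ => ⟨_, h₁.append h₂⟩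

lemma add_one_modEq_of_dvd_closedWalkLengths {d : ℕ} {v x y : V} {a b c : ℕ}
    {wx wy wc : ℕ → V} (hd : ∀ n ∈ closedWalkLengths E v, d ∣ n)
    (hx : IsDirectedWalk E wx a v x) (hy : IsDirectedWalk E wy b v y)
    (hc : IsDirectedWalk E wc c y v) (hxy : (x, y) ∈ E) :
    (a + 1 : ℤ) ≡ b [ZMOD d] := by
  have hedge : IsDirectedWalk E (fun i => if i = 0 then x else y) 1 x y :=
    ⟨rfl, rfl, fun i hi => by simpa [Nat.lt_one_iff.mp hi] using hxy⟩
  have h₁ := Int.natCast_dvd_natCast.mpr <| hd _ ⟨_, (hx.append hedge).append hc⟩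
  have h₂ := Int.natCast_dvd_natCast.mpr <| hd _ ⟨_, hy.append hc⟩
  rw [Int.modEq_iff_dvd,
    show (b : ℤ) - (a + 1) = (b + c : ℕ) - (a + 1 + c : ℕ) by push_cast; ring]
  exact dvd_sub h₂ h₁

lemma add_sum_sign_modEq_of_potential {d : ℤ} {φ : V → ℤ}
    (hφ : ∀ x y, (x, y) ∈ E → φ x + 1 ≡ φ y [ZMOD d])
    {m : ℕ} {w : ℕ → V} {ε : ℕ → Bool}
    (hw : ∀ i < m, if ε i then (w i, w (i + 1)) ∈ E else (w (i + 1), w i) ∈ E) :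
    φ (w 0) + ∑ i ∈ Finset.range m, (if ε i then 1 else -1 : ℤ) ≡ φ (w m) [ZMOD d] := by
  induction m with
  | zero => simp [Int.ModEq.refl]
  | succ k ih =>
    have ih := ih fun i hi => hw i (by omega)
    have hk := hw k k.lt_succ_self
    rw [Finset.sum_range_succ, ← add_assoc]
    cases h : ε k <;> simp only [h, Bool.false_eq_true, if_true, if_false] at hk ⊢
    · have := (hφ _ _ hk).add_right (-1)
      rw [add_neg_cancel_right] at this
      exact (ih.add_right (-1)).trans this.symm
    · exact (ih.add_right 1).trans (hφ _ _ hk)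

lemma setGcd_closedWalkLengths_eq_one
    (hsc : ∀ x y, ∃ m w, IsDirectedWalk E w m x y)
    (hal : ∀ e : ℕ, (∀ (m : ℕ) (w : ℕ → V) (ε : ℕ → Bool), w m = w 0 →
      (∀ i < m, if ε i then (w i, w (i + 1)) ∈ E else (w (i + 1), w i) ∈ E) →
      (e : ℤ) ∣ ∑ i ∈ Finset.range m, (if ε i then 1 else -1 : ℤ)) → e = 1)
    (v : V) : Nat.setGcd (closedWalkLengths E v) = 1 := by
  refine hal _ fun m w ε hclosed hw => ?_
  choose ℓ wv hwv using hsc v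
  have hφ (x y : V) (hxy : (x, y) ∈ E) :
      (ℓ x + 1 : ℤ) ≡ ℓ y [ZMOD Nat.setGcd (closedWalkLengths E v)] :=
    have ⟨_, _, hc⟩ := hsc y v
    add_one_modEq_of_dvd_closedWalkLengths (fun _ => Nat.setGcd_dvd_of_mem) (hwv x) (hwv y) hc hxy
  have := add_sum_sign_modEq_of_potential hφ hw
  rw [hclosed] at this
  simpa using Int.modEq_iff_dvd.mp this.symm

end

theorem stmt5_general {V : Type} (E : Set (V × V)) (hE : E.Nonempty)
    (hsc : ∀ x y : V, ∃ m : ℕ, ∃ w : ℕ → V,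
      w 0 = x ∧ w m = y ∧ ∀ i < m, (w i, w (i + 1)) ∈ E)
    (hal : ∀ e : ℕ, (∀ (m : ℕ) (w : ℕ → V) (ε : ℕ → Bool), w m = w 0 →
      (∀ i < m, if ε i then (w i, w (i + 1)) ∈ E else (w (i + 1), w i) ∈ E) →
      (e : ℤ) ∣ ∑ i ∈ Finset.range m, (if ε i then 1 else -1 : ℤ)) → e = 1) :
    ∃ P C : ℕ, ∀ p ≥ P, ∀ c ≥ C, Odd c →
      ∃ u w : ℕ → V, u 0 = w 0 ∧ u (2 ^ p) = u 0 ∧ w c = w 0 ∧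
        (∀ i < 2 ^ p, (u i, u (i + 1)) ∈ E) ∧ (∀ i < c, (w i, w (i + 1)) ∈ E) := by
  obtain ⟨⟨v, -⟩, -⟩ := hE
  obtain ⟨N, hN⟩ := Nat.exists_mem_closure_of_ge (closedWalkLengths E v : Set ℕ)
  rw [setGcd_closedWalkLengths_eq_one hsc hal v, AddSubmonoid.closure_eq] at hN
  refine ⟨N, N, fun p hp c hc _ => ?_⟩
  obtain ⟨u, hu0, hu, huE⟩ := hN (2 ^ p) (hp.trans Nat.lt_two_pow_self.le) (one_dvd _)
  obtain ⟨w, hw0, hw, hwE⟩ := hN c hc (one_dvd _)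
  exact ⟨u, w, hu0.trans hw0.symm, hu.trans hu0.symm, hw.trans hw0.symm, huE, hwE⟩

/-- Every strongly connected loopless finite digraph of algebraic length 1 is a
homomorphic image of `DCP(2^p, c)` for all sufficiently large `p` and all
sufficiently large odd `c`; such a homomorphism is given by closed directed walks
of lengths `2^p` and `c` sharing a common base vertex. -/
theorem stmt5 {V : Type} [Fintype V] (E : Set (V × V)) (hE : E.Nonempty)
    (hloopless : ∀ x : V, (x, x) ∉ E)
    (hsc : ∀ x y : V, ∃ m : ℕ, ∃ w : ℕ → V,
      w 0 = x ∧ w m = y ∧ ∀ i < m, (w i, w (i + 1)) ∈ E)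
    (hal : ∀ e : ℕ, (∀ (m : ℕ) (w : ℕ → V) (ε : ℕ → Bool), w m = w 0 →
      (∀ i < m, if ε i then (w i, w (i + 1)) ∈ E else (w (i + 1), w i) ∈ E) →
      (e : ℤ) ∣ ∑ i ∈ Finset.range m, (if ε i then 1 else -1 : ℤ)) → e = 1) :
    ∃ P C : ℕ, ∀ p ≥ P, ∀ c ≥ C, Odd c →
      ∃ u w : ℕ → V, u 0 = w 0 ∧ u (2 ^ p) = u 0 ∧ w c = w 0 ∧
        (∀ i < 2 ^ p, (u i, u (i + 1)) ∈ E) ∧ (∀ i < c, (w i, w (i + 1)) ∈ E) :=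
  stmt5_general E hE hsc hal
end

section
/- Let G be a digraph compatible with an n-ary cyclic operation c (n ≥ 2), meaning c applied coordinatewise to edges yields edges. If G contains a directed closed walk of length n (a homomorphism from D_n), then G has a loop. -/
/-! Apply `c` to the closed walk read as a tuple `a = (w₀, …, wₙ₋₁)` and to its rotation
`(w₁, …, wₙ₋₁, w₀)`: the two tuples are joined coordinatewise by edges of the walk, so
compatibility gives an edge from `c a` to `c (rotation of a)`, and cyclicity says both ends
are the same vertex. -/

lemma closedWalk_mem_mod {A : Type} {E : Set (A × A)} {n : ℕ} {w : ℕ → A}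
    (hw0 : w n = w 0) (hw : ∀ i < n, (w i, w (i + 1)) ∈ E) {i : ℕ} (hi : i < n) :
    (w i, w ((i + 1) % n)) ∈ E := by
  have hwrap : w ((i + 1) % n) = w (i + 1) := by
    rcases (show i + 1 ≤ n from hi).lt_or_eq with h | h
    · rw [Nat.mod_eq_of_lt h]
    · rw [h, Nat.mod_self, hw0]
  exact hwrap ▸ hw i hi

lemma mem_self_of_cyclic_of_compatible {A : Type} {E : Set (A × A)} {n : ℕ} (hn : 0 < n)
    (c : (Fin n → A) → A)
    (hcyc : ∀ x : Fin n → A, c x = c (fun i => x ⟨(i.val + 1) % n, Nat.mod_lt _ hn⟩))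
    (hcomp : ∀ a b : Fin n → A, (∀ i, (a i, b i) ∈ E) → (c a, c b) ∈ E)
    (a : Fin n → A) (ha : ∀ i, (a i, a ⟨(i.val + 1) % n, Nat.mod_lt _ hn⟩) ∈ E) :
    (c a, c a) ∈ E := by
  have h := hcomp a _ ha
  rwa [← hcyc] at h

/-- A digraph compatible with an `n`-ary cyclic operation that contains a directed
closed walk of length `n` has a loop. -/
theorem stmt8 {A : Type} (E : Set (A × A)) (n : ℕ) (hn : 2 ≤ n)
    (c : (Fin n → A) → A)
    (hcyc : ∀ x : Fin n → A,
      c x = c (fun i => x ⟨(i.val + 1) % n, Nat.mod_lt _ (by omega)⟩))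
    (hcomp : ∀ a b : Fin n → A, (∀ i, (a i, b i) ∈ E) → (c a, c b) ∈ E)
    (w : ℕ → A) (hw0 : w n = w 0) (hw : ∀ i < n, (w i, w (i + 1)) ∈ E) :
    ∃ x : A, (x, x) ∈ E :=
  ⟨c fun i => w i, mem_self_of_cyclic_of_compatible (by omega) c hcyc hcomp _
    fun i => closedWalk_mem_mod hw0 hw i.isLt⟩
end

section
/- Let A be a set with a ternary near-unanimity operation t (t(x,x,y) = t(x,y,x) = t(y,x,x) = x for all x, y), and let E ⊆ A × A be a binary relation compatible with t. Suppose E contains a 'cone': elements a, b, c₁, …, cₙ (n ≥ 2) with (cᵢ, cᵢ₊₁) ∈ E for 1 ≤ i < n, (cₙ, c₁) ∈ E, (a, cᵢ) ∈ E for all i, and (b, a) ∈ E. Then E contains a loop: some x with (x, x) ∈ E. -/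
/-!
Unroll the cycle into an `n`-periodic walk `c 0 → c 1 → ⋯` dominated by the apex `a`, and
fold it with `a` in front (`d_k = coneIter t a c k`): `d₀ = c`,
`d_{k+1} m = t a (d_k m) (d_k (m+1))`. Near-unanimity keeps every `d_k m` pointing to the next
`k + 1` walk vertices, so `X := d_{n-1} (n-1)` points to a whole period, hence to every vertex
of the walk. Since `X = t b X X` and `b → a`, induction on `k` shows that `X` points to every
`d_k m`, in particular to itself.
-/

variable {A : Type}

def IsCompatible (t : A → A → A → A) (E : Set (A × A)) : Prop :=
  ∀ ⦃x₁ x₂ x₃ y₁ y₂ y₃ : A⦄, (x₁, y₁) ∈ E → (x₂, y₂) ∈ E → (x₃, y₃) ∈ E →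
    (t x₁ x₂ x₃, t y₁ y₂ y₃) ∈ E

def coneIter (t : A → A → A → A) (a : A) (c : ℕ → A) : ℕ → ℕ → A
  | 0 => c
  | k + 1 => fun m => t a (coneIter t a c k m) (coneIter t a c k (m + 1))

section ConeOverWalk

variable {t : A → A → A → A} {E : Set (A × A)} {a : A} {c : ℕ → A}

theorem coneIter_mem_walk (hcomp : IsCompatible t E)
    (ht1 : ∀ x y : A, t x x y = x) (ht2 : ∀ x y : A, t x y x = x)
    (hwalk : ∀ m, (c m, c (m + 1)) ∈ E) (ha : ∀ m, (a, c m) ∈ E) :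
    ∀ k m s, 1 ≤ s → s ≤ k + 1 → (coneIter t a c k m, c (m + s)) ∈ E := by
  intro k
  induction k with
  | zero =>
    intro m s hs₁ hs₂
    obtain rfl : s = 1 := by omega
    exact hwalk m
  | succ k ih =>
    intro m s hs₁ hs₂
    by_cases hs : s ≤ k + 1
    · have h := hcomp (ha (m + s)) (ih m s hs₁ hs) (ih (m + 1) 1 le_rfl (by omega))
      rwa [ht1] at h
    · obtain rfl : s = k + 2 := by omega
      have h := hcomp (ha (m + (k + 2))) (ih m 1 le_rfl (by omega))
        (ih (m + 1) (k + 1) (by omega) le_rfl)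
      rwa [show m + 1 + (k + 1) = m + (k + 2) by omega, ht2] at h

theorem mem_coneIter_of_forall_mem (hcomp : IsCompatible t E)
    (ht3 : ∀ x y : A, t y x x = x) {b X : A} (hb : (b, a) ∈ E) (hX : ∀ m, (X, c m) ∈ E) :
    ∀ k m, (X, coneIter t a c k m) ∈ E := by
  intro k
  induction k with
  | zero => exact hX
  | succ k ih =>
    intro m
    have h := hcomp hb (ih m) (ih (m + 1))
    rwa [ht3] at h

theorem exists_loop_of_periodic_walk (hcomp : IsCompatible t E)
    (ht1 : ∀ x y : A, t x x y = x) (ht2 : ∀ x y : A, t x y x = x)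
    (ht3 : ∀ x y : A, t y x x = x) {n : ℕ} (hn : 0 < n) (hper : Function.Periodic c n)
    (hwalk : ∀ m, (c m, c (m + 1)) ∈ E) {b : A} (ha : ∀ m, (a, c m) ∈ E) (hb : (b, a) ∈ E) :
    ∃ x : A, (x, x) ∈ E := by
  set X := coneIter t a c (n - 1) (n - 1)
  have hX : ∀ m, (X, c m) ∈ E := by
    intro m
    have h := coneIter_mem_walk hcomp ht1 ht2 hwalk ha (n - 1) (n - 1) (m % n + 1) (by omega)
      (by have := Nat.mod_lt m hn; omega)
    rwa [show n - 1 + (m % n + 1) = m % n + n by omega, hper, hper.map_mod_nat] at h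
  exact ⟨X, mem_coneIter_of_forall_mem hcomp ht3 hb hX (n - 1) (n - 1)⟩

end ConeOverWalk

theorem add_one_mod_eq_ite {n : ℕ} (hn : 0 < n) (m : ℕ) :
    (m + 1) % n = if m % n + 1 = n then 0 else m % n + 1 := by
  rw [← Nat.mod_add_mod]
  split_ifs with h
  · rw [h, Nat.mod_self]
  · exact Nat.mod_eq_of_lt (by have := Nat.mod_lt m hn; omega)

/-- A relation compatible with a ternary near-unanimity operation which contains a
cone has a loop. -/
theorem stmt15 {A : Type} (t : A → A → A → A)
    (ht1 : ∀ x y : A, t x x y = x) (ht2 : ∀ x y : A, t x y x = x)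
    (ht3 : ∀ x y : A, t y x x = x)
    (E : Set (A × A))
    (hcomp : ∀ x₁ x₂ x₃ y₁ y₂ y₃ : A, (x₁, y₁) ∈ E → (x₂, y₂) ∈ E → (x₃, y₃) ∈ E →
      (t x₁ x₂ x₃, t y₁ y₂ y₃) ∈ E)
    (n : ℕ) (hn : 2 ≤ n) (a b : A) (c : ℕ → A)
    (hcyc : ∀ i, 1 ≤ i → i < n → (c i, c (i + 1)) ∈ E)
    (hclose : (c n, c 1) ∈ E)
    (ha : ∀ i, 1 ≤ i → i ≤ n → (a, c i) ∈ E)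
    (hb : (b, a) ∈ E) :
    ∃ x : A, (x, x) ∈ E := by
  have hn₀ : 0 < n := by omega
  have hmod : ∀ m, m % n < n := fun m => Nat.mod_lt m hn₀
  refine exists_loop_of_periodic_walk (c := fun m => c (m % n + 1))
    (fun _ _ _ _ _ _ => hcomp _ _ _ _ _ _) ht1 ht2 ht3 hn₀
    (fun m => by simp only [Nat.add_mod_right]) (fun m => ?_)
    (fun m => ha _ le_add_self (hmod m)) hb
  simp only [add_one_mod_eq_ite hn₀ m]
  split_ifs with h
  · rw [h]
    exact hclose
  · exact hcyc _ le_add_self (by have := hmod m; omega)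
end

section
/- Let G₀ = (A₀, E₀) be a loopless digraph compatible with a 6-ary operation s₀ satisfying the Siggers identity, and let s₁ be the 6-ary arithmetic mean on ℚ (which also satisfies the Siggers identity). Define A = A₀ × ℚ with the product operation s, and the digraph E on A by ((x₁,q₁),(x₂,q₂)) ∈ E iff q₁ < q₂, or q₁ = q₂ and (x₁,x₂) ∈ E₀. Then E is compatible with s and E has no loop. -/
/-!
Edges of the product relation never decrease the rational coordinate. Applying the mean to an
edge-wise family of inputs, either some coordinate strictly increases, and then so does the mean,
or all rational coordinates agree, every edge is an edge of `E₀` in the first coordinate, and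
compatibility of `s₀` with `E₀` takes over.
-/

open Finset

section LexEdge

variable {α β : Type*}

def IsPolymorphism {ι : Type*} (R : Set (α × α)) (f : (ι → α) → α) : Prop :=
  ∀ a b : ι → α, (∀ i, (a i, b i) ∈ R) → (f a, f b) ∈ R

def lexEdge [LT β] (E₀ : Set (α × α)) : Set ((α × β) × (α × β)) :=
  {e | e.1.2 < e.2.2 ∨ (e.1.2 = e.2.2 ∧ (e.1.1, e.2.1) ∈ E₀)}

variable [Preorder β] {E₀ : Set (α × α)} {u v : α × β}

theorem snd_le_of_mem_lexEdge (h : (u, v) ∈ lexEdge E₀) : u.2 ≤ v.2 :=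
  h.elim le_of_lt fun h => h.1.le

theorem fst_mem_of_mem_lexEdge_of_snd_eq (h : (u, v) ∈ lexEdge E₀) (hsnd : u.2 = v.2) :
    (u.1, v.1) ∈ E₀ :=
  h.elim (fun hlt => absurd hlt (hsnd ▸ lt_irrefl _)) And.right

theorem lexEdge_irrefl (hE₀ : ∀ x, (x, x) ∉ E₀) (u : α × β) : (u, u) ∉ lexEdge E₀ :=
  fun h => hE₀ u.1 (fst_mem_of_mem_lexEdge_of_snd_eq h rfl)

end LexEdge

section MeanProd

variable {α K ι : Type*} [Field K] [LinearOrder K] [IsStrictOrderedRing K] [Fintype ι]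

def meanProd (f : (ι → α) → α) (c : K) (v : ι → α × K) : α × K :=
  (f fun i => (v i).1, (∑ i, (v i).2) / c)

theorem isPolymorphism_lexEdge_meanProd {E₀ : Set (α × α)} {f : (ι → α) → α}
    (hf : IsPolymorphism E₀ f) {c : K} (hc : 0 < c) :
    IsPolymorphism (lexEdge E₀) (meanProd f c) := by
  intro a b hab
  have hle : ∀ i ∈ univ, (a i).2 ≤ (b i).2 := fun i _ => snd_le_of_mem_lexEdge (hab i)
  rcases (sum_le_sum hle).lt_or_eq with hlt | heq
  · exact Or.inl (div_lt_div_of_pos_right hlt hc)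
  · have hsnd := (sum_eq_sum_iff_of_le hle).1 heq
    exact Or.inr ⟨congrArg (· / c) heq, hf _ _ fun i =>
      fst_mem_of_mem_lexEdge_of_snd_eq (hab i) (hsnd i (mem_univ i))⟩

end MeanProd

theorem stmt19_general {A₀ : Type} (E₀ : Set (A₀ × A₀)) (hloopless : ∀ x : A₀, (x, x) ∉ E₀)
    (s₀ : (Fin 6 → A₀) → A₀)
    (hcomp₀ : ∀ a b : Fin 6 → A₀, (∀ i, (a i, b i) ∈ E₀) → (s₀ a, s₀ b) ∈ E₀)
    (s : (Fin 6 → A₀ × ℚ) → A₀ × ℚ)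
    (hs : ∀ v : Fin 6 → A₀ × ℚ, s v = (s₀ (fun i => (v i).1), (∑ i, (v i).2) / 6))
    (E : Set ((A₀ × ℚ) × (A₀ × ℚ)))
    (hE : ∀ u v : A₀ × ℚ, (u, v) ∈ E ↔ u.2 < v.2 ∨ (u.2 = v.2 ∧ (u.1, v.1) ∈ E₀)) :
    (∀ x y z : ℚ, (x + x + y + y + z + z) / 6 = (y + z + z + x + x + y) / 6) ∧
    (∀ a b : Fin 6 → A₀ × ℚ, (∀ i, (a i, b i) ∈ E) → (s a, s b) ∈ E) ∧
    (∀ u : A₀ × ℚ, (u, u) ∉ E) := by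
  obtain rfl : E = lexEdge E₀ := Set.ext fun e => hE e.1 e.2
  obtain rfl : s = meanProd s₀ 6 := funext hs
  exact ⟨fun x y z => by ring, isPolymorphism_lexEdge_meanProd hcomp₀ (by norm_num),
    lexEdge_irrefl hloopless⟩

/-- Product of a loopless digraph compatible with a Siggers operation with the
strict order on `ℚ` (lexicographic-style edges), under the product of the Siggers
operation with the 6-ary arithmetic mean (which also satisfies the Siggers
identity): the resulting edge relation is compatible and loopless. -/
theorem stmt19 {A₀ : Type} (E₀ : Set (A₀ × A₀)) (hloopless : ∀ x : A₀, (x, x) ∉ E₀)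
    (s₀ : (Fin 6 → A₀) → A₀)
    (hsig : ∀ x y z : A₀, s₀ ![x, x, y, y, z, z] = s₀ ![y, z, z, x, x, y])
    (hcomp₀ : ∀ a b : Fin 6 → A₀, (∀ i, (a i, b i) ∈ E₀) → (s₀ a, s₀ b) ∈ E₀)
    (s : (Fin 6 → A₀ × ℚ) → A₀ × ℚ)
    (hs : ∀ v : Fin 6 → A₀ × ℚ, s v = (s₀ (fun i => (v i).1), (∑ i, (v i).2) / 6))
    (E : Set ((A₀ × ℚ) × (A₀ × ℚ)))
    (hE : ∀ u v : A₀ × ℚ, (u, v) ∈ E ↔ u.2 < v.2 ∨ (u.2 = v.2 ∧ (u.1, v.1) ∈ E₀)) :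
    (∀ x y z : ℚ, (x + x + y + y + z + z) / 6 = (y + z + z + x + x + y) / 6) ∧
    (∀ a b : Fin 6 → A₀ × ℚ, (∀ i, (a i, b i) ∈ E) → (s a, s b) ∈ E) ∧
    (∀ u : A₀ × ℚ, (u, u) ∉ E) :=
  stmt19_general E₀ hloopless s₀ hcomp₀ s hs E hE
end
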